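/- arXiv:2305.03635 — 8 statements merged into one kernel-verified Lean document; each statement's English description precedes it below -/
import Mathlib

section
/- An MSR subspace family of F_q^2 (i.e., a set of 1-dimensional subspaces such that for each member S there exists an element of PGL(2,q) mapping S to a subspace intersecting S trivially while fixing every other member setwise) has at most 3 elements. -/
open Submodule Module

/-- A set `𝒮` of `m`-dimensional subspaces of `V` is a minimum storage regenerating (MSR)
subspace family if for each member `S` there is an invertible linear map (an element of
`PGL`, acting on subspaces) sending `S` to a subspace meeting `S` trivially while fixing
every other member setwise. -/
def IsMSRFamily {F V : Type*} [Field F] [AddCommGroup V] [Module F V]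
    (m : ℕ) (𝒮 : Set (Submodule F V)) : Prop :=
  (∀ S ∈ 𝒮, finrank F S = m) ∧
  ∀ S ∈ 𝒮, ∃ g : V ≃ₗ[F] V,
    S.map (g : V →ₗ[F] V) ⊓ S = ⊥ ∧
    ∀ T ∈ 𝒮, T ≠ S → T.map (g : V →ₗ[F] V) = T

/-! If `S` lies in an MSR family together with three other lines `T₁, T₂, T₃`, the map `g`
attached to `S` fixes three distinct points of the projective line, hence is a homothety
(write the third eigenvector in the basis of the first two and compare coefficients). But a
homothety fixes `S` as well, contradicting `g S ∩ S = 0`. -/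

open scoped LinearAlgebra.Projectivization
open Projectivization

section

variable {F V : Type*} [Field F] [AddCommGroup V] [Module F V]

theorem LinearMap.eq_smul_id_of_three_eigenvectors (hV : finrank F V = 2) {f : V →ₗ[F] V}
    {v₁ v₂ v₃ : V} {a₁ a₂ a₃ : F} (h₁₂ : LinearIndependent F ![v₁, v₂])
    (h₁₃ : LinearIndependent F ![v₁, v₃]) (h₂₃ : LinearIndependent F ![v₂, v₃])
    (he₁ : f v₁ = a₁ • v₁) (he₂ : f v₂ = a₂ • v₂) (he₃ : f v₃ = a₃ • v₃) :
    f = a₃ • LinearMap.id := by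
  have : Module.Finite F V := finite_of_finrank_eq_succ hV
  have hspan : span F {v₁, v₂} = ⊤ := by
    have := h₁₂.span_eq_top_of_card_eq_finrank (by simp [hV])
    rwa [Matrix.range_cons_cons_empty] at this
  obtain ⟨c₁, c₂, hv₃⟩ := mem_span_pair.1 (hspan ▸ mem_top : v₃ ∈ span F {v₁, v₂})
  have hc₁ : c₁ ≠ 0 := by
    rintro rfl
    exact (LinearIndependent.pair_iff' (h₂₃.ne_zero 0)).1 h₂₃ c₂ (by simpa using hv₃)
  have hc₂ : c₂ ≠ 0 := by
    rintro rfl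
    exact (LinearIndependent.pair_iff' (h₁₃.ne_zero 0)).1 h₁₃ c₁ (by simpa using hv₃)
  -- expanding `f v₃` in the basis `v₁, v₂` in two ways
  have hcoeff : (c₁ * (a₁ - a₃)) • v₁ + (c₂ * (a₂ - a₃)) • v₂ = 0 := by
    rw [← hv₃, map_add, map_smul, map_smul, he₁, he₂] at he₃
    linear_combination (norm := module) he₃
  obtain ⟨hd₁, hd₂⟩ := LinearIndependent.pair_iff.1 h₁₂ _ _ hcoeff
  have ha₁ : a₁ = a₃ := sub_eq_zero.1 ((mul_eq_zero.1 hd₁).resolve_left hc₁)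
  have ha₂ : a₂ = a₃ := sub_eq_zero.1 ((mul_eq_zero.1 hd₂).resolve_left hc₂)
  refine LinearMap.ext_on hspan ?_
  rintro v (rfl | rfl)
  · simp [he₁, ha₁]
  · simp [he₂, ha₂]

theorem Projectivization.exists_apply_rep_eq_smul {f : V →ₗ[F] V} {P : ℙ F V}
    (hf : P.submodule.map f ≤ P.submodule) : ∃ a : F, f P.rep = a • P.rep := by
  rw [submodule_eq] at hf
  obtain ⟨a, ha⟩ := mem_span_singleton.1 (hf (mem_map_of_mem (mem_span_singleton_self P.rep)))
  exact ⟨a, ha.symm⟩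

theorem Submodule.map_le_of_map_le_three_lines (hV : finrank F V = 2) {f : V →ₗ[F] V}
    {T₁ T₂ T₃ : Submodule F V} (hT₁ : finrank F T₁ = 1) (hT₂ : finrank F T₂ = 1)
    (hT₃ : finrank F T₃ = 1) (h₁₂ : T₁ ≠ T₂) (h₁₃ : T₁ ≠ T₃) (h₂₃ : T₂ ≠ T₃)
    (hf₁ : T₁.map f ≤ T₁) (hf₂ : T₂.map f ≤ T₂) (hf₃ : T₃.map f ≤ T₃) (W : Submodule F V) :
    W.map f ≤ W := by
  have hP : ∀ {T T' : Submodule F V} (hT : finrank F T = 1) (hT' : finrank F T' = 1),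
      T ≠ T' → LinearIndependent F ![(mk'' T hT).rep, (mk'' T' hT').rep] := by
    intro T T' hT hT' hne
    rw [linearIndependent_pair_iff_ne]
    exact fun h ↦ hne (by simpa using congrArg Projectivization.submodule h)
  obtain ⟨a₁, he₁⟩ := exists_apply_rep_eq_smul (P := mk'' T₁ hT₁) (by rwa [submodule_mk''])
  obtain ⟨a₂, he₂⟩ := exists_apply_rep_eq_smul (P := mk'' T₂ hT₂) (by rwa [submodule_mk''])
  obtain ⟨a₃, he₃⟩ := exists_apply_rep_eq_smul (P := mk'' T₃ hT₃) (by rwa [submodule_mk''])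
  rw [LinearMap.eq_smul_id_of_three_eigenvectors hV (hP hT₁ hT₂ h₁₂) (hP hT₁ hT₃ h₁₃)
    (hP hT₂ hT₃ h₂₃) he₁ he₂ he₃]
  rintro _ ⟨v, hv, rfl⟩
  exact W.smul_mem a₃ hv

end

theorem stmt0_general (F : Type*) [Field F]
    (𝒮 : Set (Submodule F (Fin 2 → F))) (h : IsMSRFamily 1 𝒮) :
    𝒮.ncard ≤ 3 := by
  by_contra! h𝒮
  have hfin : 𝒮.Finite := Set.finite_of_ncard_pos (by omega)
  obtain ⟨S, hS⟩ := Set.nonempty_of_ncard_ne_zero (by omega : 𝒮.ncard ≠ 0)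
  obtain ⟨g, hgS, hg⟩ := h.2 S hS
  have hcard : 2 < (𝒮 \ {S}).ncard := by
    rw [Set.ncard_sdiff_singleton_of_mem hS]
    omega
  obtain ⟨T₁, T₂, T₃, hT₁, hT₂, hT₃, h₁₂, h₁₃, h₂₃⟩ := (Set.two_lt_ncard_iff hfin.sdiff).1 hcard
  have hmap (T) (hT : T ∈ 𝒮 \ {S}) := (hg T hT.1 hT.2).le
  have hgS_le : S.map (g : (Fin 2 → F) →ₗ[F] Fin 2 → F) ≤ S :=
    map_le_of_map_le_three_lines (by simp) (h.1 T₁ hT₁.1) (h.1 T₂ hT₂.1) (h.1 T₃ hT₃.1)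
      h₁₂ h₁₃ h₂₃ (hmap T₁ hT₁) (hmap T₂ hT₂) (hmap T₃ hT₃) S
  rw [inf_eq_left.2 hgS_le] at hgS
  have hrank := LinearEquiv.finrank_map_eq g S
  rw [hgS, h.1 S hS] at hrank
  simp at hrank

/-- An MSR subspace family of `F_q^2` has at most 3 elements. -/
theorem stmt0 (F : Type*) [Field F] [Fintype F]
    (𝒮 : Set (Submodule F (Fin 2 → F))) (h : IsMSRFamily 1 𝒮) :
    𝒮.ncard ≤ 3 :=
  stmt0_general F 𝒮 h
end

section
/- Let S be an MSR subspace family of m-spaces in F_q^{2m} with joint stabilizer U. If there exists an ℓ-dimensional subspace H with ℓ ≥ m+1 that is fixed pointwise by U (i.e., every 1-space of H is fixed by every element of U), then S is maximal. -/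
open Submodule Module

/-- If the joint stabilizer of an MSR family of `m`-spaces of `F_q^{2m}` fixes pointwise
(i.e. fixes every 1-dimensional subspace of) some subspace `H` of dimension `≥ m+1`,
then the family is maximal. -/
theorem stmt4 (F : Type*) [Field F] [Fintype F] (m : ℕ)
    (𝒮 : Set (Submodule F (Fin (2 * m) → F)))
    (hMSR : IsMSRFamily m 𝒮)
    (H : Submodule F (Fin (2 * m) → F))
    (hH : m + 1 ≤ finrank F H)
    (hfix : ∀ g : (Fin (2 * m) → F) ≃ₗ[F] (Fin (2 * m) → F),
        (∀ T ∈ 𝒮, T.map (g : (Fin (2 * m) → F) →ₗ[F] (Fin (2 * m) → F)) = T) →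
        ∀ P : Submodule F (Fin (2 * m) → F), finrank F P = 1 → P ≤ H →
          P.map (g : (Fin (2 * m) → F) →ₗ[F] (Fin (2 * m) → F)) = P) :
    ∀ T : Submodule F (Fin (2 * m) → F), T ∉ 𝒮 → ¬ IsMSRFamily m (insert T 𝒮) := by
  intro T hT hMSR'
  obtain ⟨hdim, hmap⟩ := hMSR'
  obtain ⟨g, hg0, hgfix⟩ := hmap T (Set.mem_insert T 𝒮)
  have hfixS : ∀ S ∈ 𝒮, S.map (g : (Fin (2 * m) → F) →ₗ[F] (Fin (2 * m) → F)) = S := by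
    intro S hS
    exact hgfix S (Set.mem_insert_of_mem _ hS) (by rintro rfl; exact hT hS)
  have hTm : finrank F T = m := hdim T (Set.mem_insert _ _)
  have hamb : finrank F (Fin (2 * m) → F) = 2 * m := by
    simp [Module.finrank_pi]
  have hnt : T ⊓ H ≠ ⊥ := by
    intro hbot
    have hsum := Submodule.finrank_sup_add_finrank_inf_eq T H
    rw [hbot, finrank_bot, add_zero, hTm] at hsum
    have hle := Submodule.finrank_le (T ⊔ H)
    rw [hamb] at hle
    omega
  obtain ⟨x, hx, hx0⟩ := Submodule.ne_bot_iff _ |>.mp hnt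
  have hxT : x ∈ T := hx.1
  have hxH : x ∈ H := hx.2
  have hspan : (Submodule.span F {x}).map
      (g : (Fin (2 * m) → F) →ₗ[F] (Fin (2 * m) → F)) = Submodule.span F {x} :=
    hfix g hfixS _ (finrank_span_singleton hx0)
      ((Submodule.span_singleton_le_iff_mem _ _).mpr hxH)
  have hgx : g x ∈ Submodule.span F {x} := by
    rw [← hspan]
    exact ⟨x, Submodule.mem_span_singleton_self x, rfl⟩
  have hgxT : g x ∈ T := (Submodule.span_singleton_le_iff_mem _ _).mpr hxT hgx
  have hgxTg : g x ∈ T.map (g : (Fin (2 * m) → F) →ₗ[F] (Fin (2 * m) → F)) :=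
    ⟨x, hxT, rfl⟩
  have : g x ∈ (⊥ : Submodule F (Fin (2 * m) → F)) := hg0 ▸ ⟨hgxTg, hgxT⟩
  have : g x = 0 := by simpa using this
  exact hx0 (by simpa using (g.map_eq_zero_iff).mp this)
end

section
/- The three 1-spaces ⟨e_1⟩, ⟨e_2⟩, ⟨e_1+e_2⟩ of F_q^2 with q ≥ 3 form an MSR subspace family: for α ∈ F_q \ {0,1}, the matrices g_1 = [[1,0],[α,1-α]], g_2 = [[1-α^{-1}, α^{-1}],[0,1]], g_3 = [[1,0],[0,α]] witness this, with S_i^{g_i} = ⟨e_1 + α e_2⟩ for each i. -/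
/-!
Each `gᵢ` has the spanning vectors of the other two lines as eigenvectors and sends the spanning
vector of `Sᵢ` to a multiple of `e₁ + α e₂`. The line `T = ⟨e₁ + α e₂⟩` meets `S₁, S₂, S₃`
trivially because the corresponding `2 × 2` determinants are `-α`, `1` and `1 - α`.
-/

open Submodule Module Matrix

section

variable {F : Type*} [Field F]

theorem Matrix.map_span_singleton_of_mulVec_eq_smul {n : Type*} [Fintype n]
    (M : Matrix n n F) {v w : n → F} {c : F} (hc : c ≠ 0) (h : M *ᵥ v = c • w) :
    (span F {v}).map M.mulVecLin = span F {w} := by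
  rw [map_span, Set.image_singleton, mulVecLin_apply, h,
    span_singleton_smul_eq (isUnit_iff_ne_zero.mpr hc)]

theorem span_singleton_inf_span_singleton_eq_bot_of_fin_two {v w : Fin 2 → F}
    (h : v 0 * w 1 - v 1 * w 0 ≠ 0) : span F {v} ⊓ span F {w} = ⊥ := by
  rw [eq_bot_iff]
  rintro x ⟨hv, hw⟩
  obtain ⟨a, rfl⟩ := mem_span_singleton.mp hv
  obtain ⟨b, hb⟩ := mem_span_singleton.mp hw
  have h0 := congr_fun hb 0
  have h1 := congr_fun hb 1
  simp only [Pi.smul_apply, smul_eq_mul] at h0 h1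
  have ha : a * (v 0 * w 1 - v 1 * w 0) = 0 := by linear_combination w 0 * h1 - w 1 * h0
  simp [(mul_eq_zero.mp ha).resolve_right h]

theorem isMSRFamily_range_of_isUnit_det {ι n : Type*} [Fintype n] [DecidableEq n] {m : ℕ}
    (S : ι → Submodule F (n → F)) (g : ι → Matrix n n F) (hg : ∀ i, IsUnit (g i).det)
    (hS : ∀ i, finrank F (S i) = m) (hdisj : ∀ i, (S i).map (g i).mulVecLin ⊓ S i = ⊥)
    (hfix : ∀ i j, j ≠ i → (S j).map (g i).mulVecLin = S j) :
    IsMSRFamily m (Set.range S) := by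
  refine ⟨Set.forall_mem_range.mpr hS, Set.forall_mem_range.mpr fun i => ?_⟩
  refine ⟨(g i).toLinearEquiv' ((g i).invertibleOfIsUnitDet (hg i)), hdisj i, ?_⟩
  exact Set.forall_mem_range.mpr fun j hne => hfix i j (ne_of_apply_ne S hne)

end

theorem stmt6_general (F : Type*) [Field F]
    (α : F) (hα0 : α ≠ 0) (hα1 : α ≠ 1) :
    let S₁ : Submodule F (Fin 2 → F) := span F {![1, 0]}
    let S₂ : Submodule F (Fin 2 → F) := span F {![0, 1]}
    let S₃ : Submodule F (Fin 2 → F) := span F {![1, 1]}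
    let T : Submodule F (Fin 2 → F) := span F {![1, α]}
    let g₁ := Matrix.mulVecLin !![1, 0; α, 1 - α]
    let g₂ := Matrix.mulVecLin !![1 - α⁻¹, α⁻¹; 0, 1]
    let g₃ := Matrix.mulVecLin !![(1 : F), 0; 0, α]
    (S₁.map g₁ = T ∧ S₂.map g₁ = S₂ ∧ S₃.map g₁ = S₃) ∧
    (S₂.map g₂ = T ∧ S₁.map g₂ = S₁ ∧ S₃.map g₂ = S₃) ∧
    (S₃.map g₃ = T ∧ S₁.map g₃ = S₁ ∧ S₂.map g₃ = S₂) ∧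
    (T ⊓ S₁ = ⊥ ∧ T ⊓ S₂ = ⊥ ∧ T ⊓ S₃ = ⊥) ∧
    IsMSRFamily 1 {S₁, S₂, S₃} := by
  intro S₁ S₂ S₃ T g₁ g₂ g₃
  have h1α : 1 - α ≠ 0 := sub_ne_zero.mpr hα1.symm
  have h1αinv : 1 - α⁻¹ ≠ 0 := sub_ne_zero.mpr (by simpa [eq_comm] using hα1)
  have hmaps : (S₁.map g₁ = T ∧ S₂.map g₁ = S₂ ∧ S₃.map g₁ = S₃) ∧
      (S₂.map g₂ = T ∧ S₁.map g₂ = S₁ ∧ S₃.map g₂ = S₃) ∧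
      (S₃.map g₃ = T ∧ S₁.map g₃ = S₁ ∧ S₂.map g₃ = S₂) := by
    have eig := @map_span_singleton_of_mulVec_eq_smul F _ (Fin 2) _
    refine ⟨⟨eig _ one_ne_zero ?_, eig _ h1α ?_, eig _ one_ne_zero ?_⟩,
      ⟨eig _ (inv_ne_zero hα0) ?_, eig _ h1αinv ?_, eig _ one_ne_zero ?_⟩,
      ⟨eig _ one_ne_zero ?_, eig _ one_ne_zero ?_, eig _ hα0 ?_⟩⟩
    all_goals ext i; fin_cases i <;> simp [hα0]
  have hT : T ⊓ S₁ = ⊥ ∧ T ⊓ S₂ = ⊥ ∧ T ⊓ S₃ = ⊥ :=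
    ⟨span_singleton_inf_span_singleton_eq_bot_of_fin_two (by simpa),
      span_singleton_inf_span_singleton_eq_bot_of_fin_two (by simp),
      span_singleton_inf_span_singleton_eq_bot_of_fin_two (by simpa using h1α)⟩
  refine ⟨hmaps.1, hmaps.2.1, hmaps.2.2, hT, ?_⟩
  obtain ⟨⟨hg₁, hg₁₂, hg₁₃⟩, ⟨hg₂, hg₂₁, hg₂₃⟩, ⟨hg₃, hg₃₁, hg₃₂⟩⟩ := hmaps
  rw [show ({S₁, S₂, S₃} : Set _) = Set.range ![S₁, S₂, S₃] by
    rw [range_cons, range_cons_cons_empty, Set.singleton_union]]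
  refine isMSRFamily_range_of_isUnit_det _
    ![!![1, 0; α, 1 - α], !![1 - α⁻¹, α⁻¹; 0, 1], !![(1 : F), 0; 0, α]] ?_ ?_ ?_ ?_
  · intro i; fin_cases i <;> simp [det_fin_two_of, h1α, h1αinv, hα0]
  · intro i; fin_cases i <;> exact finrank_span_singleton (by simp)
  · intro i; fin_cases i
    exacts [hg₁ ▸ hT.1, hg₂ ▸ hT.2.1, hg₃ ▸ hT.2.2]
  · intro i j hne; fin_cases i <;> fin_cases j
    exacts [absurd rfl hne, hg₁₂, hg₁₃, hg₂₁, absurd rfl hne, hg₂₃, hg₃₁, hg₃₂, absurd rfl hne]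

/-- For `q ≥ 3` and `α ∈ F_q \ {0,1}`, the three points `⟨e₁⟩, ⟨e₂⟩, ⟨e₁+e₂⟩` of `F_q^2`
form an MSR subspace family, witnessed by the matrices
`g₁ = [[1,0],[α,1-α]]`, `g₂ = [[1-α⁻¹,α⁻¹],[0,1]]`, `g₃ = [[1,0],[0,α]]`
(acting by left multiplication on column vectors), with `Sᵢ^{gᵢ} = ⟨e₁ + α e₂⟩` and
`Sⱼ^{gᵢ} = Sⱼ` for `j ≠ i`. -/
theorem stmt6 (F : Type*) [Field F] [Fintype F] (hq : 3 ≤ Fintype.card F)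
    (α : F) (hα0 : α ≠ 0) (hα1 : α ≠ 1) :
    let S₁ : Submodule F (Fin 2 → F) := span F {![1, 0]}
    let S₂ : Submodule F (Fin 2 → F) := span F {![0, 1]}
    let S₃ : Submodule F (Fin 2 → F) := span F {![1, 1]}
    let T : Submodule F (Fin 2 → F) := span F {![1, α]}
    let g₁ := Matrix.mulVecLin !![1, 0; α, 1 - α]
    let g₂ := Matrix.mulVecLin !![1 - α⁻¹, α⁻¹; 0, 1]
    let g₃ := Matrix.mulVecLin !![(1 : F), 0; 0, α]
    (S₁.map g₁ = T ∧ S₂.map g₁ = S₂ ∧ S₃.map g₁ = S₃) ∧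
    (S₂.map g₂ = T ∧ S₁.map g₂ = S₁ ∧ S₃.map g₂ = S₃) ∧
    (S₃.map g₃ = T ∧ S₁.map g₃ = S₁ ∧ S₂.map g₃ = S₂) ∧
    (T ⊓ S₁ = ⊥ ∧ T ⊓ S₂ = ⊥ ∧ T ⊓ S₃ = ⊥) ∧
    IsMSRFamily 1 {S₁, S₂, S₃} :=
  stmt6_general F α hα0 hα1
end

section
/- If {S_1,...,S_k} is an MSR subspace family of m-spaces in F_q^{2m} witnessed by matrices g_1,...,g_k, then the tensor/block construction yields an MSR subspace family of 2m-spaces in F_q^{4m} of size k+3: namely S'_i = S_i ⊕ S_i^h (where h maps e_i to e_{i+2m}) with witness diag(g_i, g_i) for i ≤ k, together with S'_{k+1} = ⟨e_1,...,e_{2m}⟩, S'_{k+2} = ⟨e_{2m+1},...,e_{4m}⟩, S'_{k+3} = ⟨e_1+e_{2m+1},...,e_{2m}+e_{4m}⟩ with the block-matrix witnesses [[I,0],[αI,(1-α)I]], [[(1-α^{-1})I, α^{-1}I],[0,I]], [[I,0],[0,αI]] for any α ∈ F_q \ {0,1}, q ≥ 3. -/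
/-!
Identify `W × W` with `F² ⊗ W`. Then `S × S = F² ⊗ S`, and the three extra subspaces are
`⟨p⟩ ⊗ W` for the points `p = (1,0), (0,1), (1,1)` of the projective line over `F`. A scalar block
matrix `M ⊗ 1` preserves every `F² ⊗ S` and sends `⟨p⟩ ⊗ W` to `⟨M p⟩ ⊗ W`, while `1 ⊗ g = diag(g, g)`
preserves every `⟨p⟩ ⊗ W`. So `diag(gᵢ, gᵢ)` witnesses `Sᵢ × Sᵢ`, and a witness for `⟨p⟩ ⊗ W` is
`M ⊗ 1` for any `M ∈ GL₂(F)` fixing the other two points and moving `p`; for `q ≥ 3` such `M` exist.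
-/

open Submodule Module

open Matrix

section

variable {F W : Type*} [Field F] [AddCommGroup W] [Module F W]

def IsMSRWitness {V : Type*} [AddCommGroup V] [Module F V] (𝒮 : Set (Submodule F V))
    (S : Submodule F V) (g : V ≃ₗ[F] V) : Prop :=
  S.map (g : V →ₗ[F] V) ⊓ S = ⊥ ∧ ∀ T ∈ 𝒮, T ≠ S → T.map (g : V →ₗ[F] V) = T

lemma prod_self_injective : Function.Injective fun S : Submodule F W => S.prod S := by
  intro S T h
  simpa only [prod_map_fst] using congrArg (map (LinearMap.fst F W W)) h

lemma finrank_prod_self [FiniteDimensional F W] (S : Submodule F W) :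
    finrank F (S.prod S) = 2 * finrank F S := by
  have := LinearMap.finrank_range_of_inj (f := S.subtype.prodMap S.subtype)
    (Prod.map_injective.mpr ⟨S.injective_subtype, S.injective_subtype⟩)
  rwa [LinearMap.range_prodMap, S.range_subtype, finrank_prod, ← two_mul] at this

/-- `x ↦ p ⊗ x` under `W × W ≅ F² ⊗ W`. -/
def tensorWith (p : Fin 2 → F) : W →ₗ[F] W × W :=
  (p 0 • LinearMap.id).prod (p 1 • LinearMap.id)

@[simp] lemma tensorWith_apply (p : Fin 2 → F) (x : W) :
    tensorWith p x = (p 0 • x, p 1 • x) := rfl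

lemma tensorWith_injective {p : Fin 2 → F} (hp : p ≠ 0) :
    Function.Injective (tensorWith p : W →ₗ[F] W × W) := by
  rw [← LinearMap.ker_eq_bot, LinearMap.ker_eq_bot']
  intro x hx
  by_contra hx0
  simp only [tensorWith_apply, Prod.mk_eq_zero, smul_eq_zero, hx0, or_false] at hx
  exact hp (funext fun i => by fin_cases i <;> simp [hx.1, hx.2])

variable (W) in
def lineTensor (p : Fin 2 → F) : Submodule F (W × W) :=
  LinearMap.range (tensorWith p)

lemma mem_lineTensor {p : Fin 2 → F} {v : W × W} :
    v ∈ lineTensor W p ↔ ∃ x : W, (p 0 • x, p 1 • x) = v := Iff.rfl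

lemma lineTensor_one_zero : lineTensor W ![(1 : F), 0] = (⊤ : Submodule F W).prod ⊥ := by
  ext v
  simp [mem_lineTensor, Prod.ext_iff, eq_comm]

lemma lineTensor_zero_one : lineTensor W ![(0 : F), 1] = (⊥ : Submodule F W).prod ⊤ := by
  ext v
  simp [mem_lineTensor, Prod.ext_iff, eq_comm]

lemma lineTensor_one_one :
    lineTensor W ![(1 : F), 1] = LinearMap.range (LinearMap.id.prod LinearMap.id) := by
  simp [lineTensor, tensorWith]

lemma finrank_lineTensor [FiniteDimensional F W] {p : Fin 2 → F} (hp : p ≠ 0) :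
    finrank F (lineTensor W p) = finrank F W :=
  LinearMap.finrank_range_of_inj (tensorWith_injective hp)

lemma lineTensor_ne_bot [Nontrivial W] {p : Fin 2 → F} (hp : p ≠ 0) : lineTensor W p ≠ ⊥ := by
  rw [lineTensor, Ne, LinearMap.range_eq_bot]
  intro h
  obtain ⟨x, hx⟩ := exists_ne (0 : W)
  exact hx (tensorWith_injective hp (by rw [h, map_zero, LinearMap.zero_apply]))

lemma lineTensor_smul {t : F} (ht : t ≠ 0) (p : Fin 2 → F) :
    lineTensor W (t • p) = lineTensor W p := by
  ext v
  simp only [mem_lineTensor, Pi.smul_apply, smul_eq_mul, mul_smul]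
  constructor
  · rintro ⟨x, rfl⟩; exact ⟨t • x, by simp only [smul_comm t]⟩
  · rintro ⟨x, rfl⟩; exact ⟨t⁻¹ • x, by simp only [smul_comm t, inv_smul_smul₀ ht]⟩

lemma lineTensor_inf_eq_bot {p q : Fin 2 → F} (hpq : p 0 * q 1 - p 1 * q 0 ≠ 0) :
    lineTensor W p ⊓ lineTensor W q = ⊥ := by
  rw [eq_bot_iff]
  intro v hv
  obtain ⟨⟨x, rfl⟩, ⟨y, hy⟩⟩ := And.imp mem_lineTensor.mp mem_lineTensor.mp (mem_inf.mp hv)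
  simp only [Prod.mk.injEq] at hy
  have hx : (p 0 * q 1 - p 1 * q 0) • x = 0 := by
    linear_combination (norm := module) q 1 • hy.1.symm - q 0 • hy.2.symm
  simp [(smul_eq_zero.mp hx).resolve_left hpq]

/-- For `0 ≠ x ∈ S`, the vectors `(x, 0)` and `(0, x)` cannot both lie in `⟨p⟩ ⊗ W`. -/
lemma prod_self_ne_lineTensor {S : Submodule F W} (hS : S ≠ ⊥) (p : Fin 2 → F) :
    S.prod S ≠ lineTensor W p := by
  obtain ⟨x, hxS, hx⟩ := S.ne_bot_iff.mp hS
  intro h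
  obtain ⟨a, ha⟩ := mem_lineTensor.mp (h ▸ mem_prod.mpr ⟨hxS, zero_mem S⟩ : (x, 0) ∈ lineTensor W p)
  obtain ⟨b, hb⟩ := mem_lineTensor.mp (h ▸ mem_prod.mpr ⟨zero_mem S, hxS⟩ : (0, x) ∈ lineTensor W p)
  simp only [Prod.mk.injEq] at ha hb
  rcases smul_eq_zero.mp hb.1 with h0 | h0
  · exact hx (by rw [← ha.1, h0, zero_smul])
  · exact hx (by rw [← hb.2, h0, smul_zero])

lemma map_prodCongr_lineTensor (g : W ≃ₗ[F] W) (p : Fin 2 → F) :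
    (lineTensor W p).map (g.prodCongr g : W × W →ₗ[F] W × W) = lineTensor W p := by
  have hcomm : (g.prodCongr g : W × W →ₗ[F] W × W) ∘ₗ tensorWith p = tensorWith p ∘ₗ g := by
    ext x <;> simp
  rw [lineTensor, ← LinearMap.range_comp, hcomm, LinearMap.range_comp_of_range_eq_top _ g.range]

/-- `M ⊗ 1` on `W × W ≅ F² ⊗ W`. -/
def blockMap (M : Matrix (Fin 2) (Fin 2) F) : Module.End F (W × W) :=
  (M 0 0 • LinearMap.fst F W W + M 0 1 • LinearMap.snd F W W).prod
    (M 1 0 • LinearMap.fst F W W + M 1 1 • LinearMap.snd F W W)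

@[simp] lemma blockMap_apply (M : Matrix (Fin 2) (Fin 2) F) (v : W × W) :
    blockMap M v = (M 0 0 • v.1 + M 0 1 • v.2, M 1 0 • v.1 + M 1 1 • v.2) := rfl

lemma blockMap_mul (M N : Matrix (Fin 2) (Fin 2) F) :
    blockMap (W := W) (M * N) = blockMap M ∘ₗ blockMap N := by
  refine LinearMap.ext fun v => Prod.ext ?_ ?_ <;>
    simp only [LinearMap.comp_apply, blockMap_apply, Matrix.mul_apply, Fin.sum_univ_two] <;> module

lemma blockMap_one : blockMap (W := W) (1 : Matrix (Fin 2) (Fin 2) F) = LinearMap.id := by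
  ext v <;> simp

lemma prod_self_le_comap_blockMap (M : Matrix (Fin 2) (Fin 2) F) (S : Submodule F W) :
    S.prod S ≤ (S.prod S).comap (blockMap M) := by
  rintro v ⟨h1, h2⟩
  exact ⟨add_mem (smul_mem S _ h1) (smul_mem S _ h2), add_mem (smul_mem S _ h1) (smul_mem S _ h2)⟩

lemma blockMap_comp_tensorWith (M : Matrix (Fin 2) (Fin 2) F) (p : Fin 2 → F) :
    blockMap M ∘ₗ tensorWith p = tensorWith (W := W) (M *ᵥ p) := by
  refine LinearMap.ext fun x => Prod.ext ?_ ?_ <;>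
    simp only [LinearMap.comp_apply, tensorWith_apply, blockMap_apply, mulVec_fin_two,
      cons_val_zero, cons_val_one] <;> module

lemma map_blockMap_lineTensor (M : Matrix (Fin 2) (Fin 2) F) (p : Fin 2 → F) :
    (lineTensor W p).map (blockMap M) = lineTensor W (M *ᵥ p) := by
  rw [lineTensor, lineTensor, ← LinearMap.range_comp, blockMap_comp_tensorWith]

noncomputable def blockEquiv (M : Matrix (Fin 2) (Fin 2) F) (hM : IsUnit M.det) :
    (W × W) ≃ₗ[F] (W × W) :=
  .ofLinearMap (blockMap M) (blockMap M⁻¹)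
    (by rw [← blockMap_mul, mul_nonsing_inv _ hM, blockMap_one])
    (by rw [← blockMap_mul, nonsing_inv_mul _ hM, blockMap_one])

@[simp] lemma coe_blockEquiv (M : Matrix (Fin 2) (Fin 2) F) (hM : IsUnit M.det) :
    (blockEquiv (W := W) M hM : W × W →ₗ[F] W × W) = blockMap M := rfl

lemma map_blockEquiv_prod_self (M : Matrix (Fin 2) (Fin 2) F) (hM : IsUnit M.det)
    (S : Submodule F W) :
    (S.prod S).map (blockEquiv (W := W) M hM : W × W →ₗ[F] W × W) = S.prod S := by
  refine le_antisymm (map_le_iff_le_comap.mpr (prod_self_le_comap_blockMap M S)) fun v hv => ?_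
  exact ⟨blockMap M⁻¹ v, prod_self_le_comap_blockMap M⁻¹ S hv, (blockEquiv M hM).apply_symm_apply v⟩

def tensorFamily (𝒮 : Set (Submodule F W)) (P : Set (Fin 2 → F)) : Set (Submodule F (W × W)) :=
  (fun S => S.prod S) '' 𝒮 ∪ lineTensor W '' P

/-- The lines `⟨p⟩`, `p ∈ P`, form an MSR family of `1`-spaces of `F²` with matrix witnesses:
`M p ∉ ⟨p⟩`, and `M` fixes every other line. -/
def IsMSRPointFamily (P : Set (Fin 2 → F)) : Prop :=
  ∀ p ∈ P, ∃ M : Matrix (Fin 2) (Fin 2) F, IsUnit M.det ∧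
    p 0 * (M *ᵥ p) 1 - p 1 * (M *ᵥ p) 0 ≠ 0 ∧ ∀ q ∈ P, q ≠ p → ∃ t : F, t ≠ 0 ∧ M *ᵥ q = t • q

lemma IsMSRPointFamily.ne_zero {P : Set (Fin 2 → F)} (hP : IsMSRPointFamily P) {p : Fin 2 → F}
    (hp : p ∈ P) : p ≠ 0 := by
  rintro rfl
  obtain ⟨M, -, hmove, -⟩ := hP 0 hp
  simp at hmove

lemma IsMSRPointFamily.injOn_lineTensor [Nontrivial W] {P : Set (Fin 2 → F)}
    (hP : IsMSRPointFamily P) : P.InjOn (lineTensor W) := by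
  intro p hp q hq hpq
  by_contra hne
  obtain ⟨M, -, hmove, hfix⟩ := hP p hp
  obtain ⟨t, ht, hMq⟩ := hfix q hq (Ne.symm hne)
  have hfixp : (lineTensor W p).map (blockMap M) = lineTensor W p := by
    rw [hpq, map_blockMap_lineTensor, hMq, lineTensor_smul ht]
  have := lineTensor_inf_eq_bot (W := W) hmove
  rw [← map_blockMap_lineTensor, hfixp, inf_idem] at this
  exact lineTensor_ne_bot (hP.ne_zero hp) this

lemma isMSRPointFamily_of_ne_zero_ne_one {α : F} (hα0 : α ≠ 0) (hα1 : α ≠ 1) :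
    IsMSRPointFamily ({![1, 0], ![0, 1], ![1, 1]} : Set (Fin 2 → F)) := by
  have h1α : 1 - α ≠ 0 := sub_ne_zero.mpr hα1.symm
  have h1α' : 1 - α⁻¹ ≠ 0 := sub_ne_zero.mpr (by simpa [eq_comm] using hα1)
  rintro p (rfl | rfl | rfl)
  · refine ⟨!![1, 0; α, 1 - α], by simpa using h1α, by simpa using hα0, ?_⟩
    rintro q (rfl | rfl | rfl) hne
    · exact absurd rfl hne
    · exact ⟨1 - α, h1α, by ext i; fin_cases i <;> simp⟩
    · exact ⟨1, one_ne_zero, by ext i; fin_cases i <;> simp⟩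
  · refine ⟨!![1 - α⁻¹, α⁻¹; 0, 1], by simpa using h1α', by simpa using hα0, ?_⟩
    rintro q (rfl | rfl | rfl) hne
    · exact ⟨1 - α⁻¹, h1α', by ext i; fin_cases i <;> simp⟩
    · exact absurd rfl hne
    · exact ⟨1, one_ne_zero, by ext i; fin_cases i <;> simp⟩
  · refine ⟨!![1, 0; 0, α], by simpa using hα0, by simpa [sub_eq_zero] using hα1, ?_⟩
    rintro q (rfl | rfl | rfl) hne
    · exact ⟨1, one_ne_zero, by ext i; fin_cases i <;> simp⟩
    · exact ⟨α, hα0, by ext i; fin_cases i <;> simp⟩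
    · exact absurd rfl hne

lemma ncard_three_points : ({![1, 0], ![0, 1], ![1, 1]} : Set (Fin 2 → F)).ncard = 3 :=
  Set.ncard_eq_three.mpr ⟨_, _, _, by simp [funext_iff, Fin.forall_fin_two],
    by simp [funext_iff, Fin.forall_fin_two], by simp [funext_iff, Fin.forall_fin_two], rfl⟩

lemma isMSRWitness_prodCongr {𝒮 : Set (Submodule F W)} {S : Submodule F W} {g : W ≃ₗ[F] W}
    (hg : IsMSRWitness 𝒮 S g) (P : Set (Fin 2 → F)) :
    IsMSRWitness (tensorFamily 𝒮 P) (S.prod S) (g.prodCongr g) := by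
  refine ⟨?_, ?_⟩
  · rw [LinearEquiv.coe_prodCongr, LinearMap.prodMap_map_prod, prod_inf_prod, hg.1, prod_bot]
  · rintro _ (⟨T, hT, rfl⟩ | ⟨q, -, rfl⟩) hne
    · rw [LinearEquiv.coe_prodCongr, LinearMap.prodMap_map_prod,
        hg.2 T hT fun h => hne (h ▸ rfl)]
    · exact map_prodCongr_lineTensor g q

lemma isMSRWitness_blockEquiv {M : Matrix (Fin 2) (Fin 2) F} (hM : IsUnit M.det)
    {p : Fin 2 → F} (hmove : p 0 * (M *ᵥ p) 1 - p 1 * (M *ᵥ p) 0 ≠ 0) {P : Set (Fin 2 → F)}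
    (hfix : ∀ q ∈ P, q ≠ p → ∃ t : F, t ≠ 0 ∧ M *ᵥ q = t • q) (𝒮 : Set (Submodule F W)) :
    IsMSRWitness (tensorFamily 𝒮 P) (lineTensor W p) (blockEquiv M hM) := by
  refine ⟨?_, ?_⟩
  · rw [coe_blockEquiv, map_blockMap_lineTensor, inf_comm]
    exact lineTensor_inf_eq_bot hmove
  · rintro _ (⟨S, -, rfl⟩ | ⟨q, hq, rfl⟩) hne
    · exact map_blockEquiv_prod_self M hM S
    · obtain ⟨t, ht, hMq⟩ := hfix q hq fun h => hne (h ▸ rfl)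
      rw [coe_blockEquiv, map_blockMap_lineTensor, hMq, lineTensor_smul ht]

theorem IsMSRFamily.tensorFamily [FiniteDimensional F W] {m : ℕ} {𝒮 : Set (Submodule F W)}
    (h𝒮 : IsMSRFamily m 𝒮) (hW : finrank F W = 2 * m) {P : Set (Fin 2 → F)}
    (hP : IsMSRPointFamily P) : IsMSRFamily (2 * m) (tensorFamily 𝒮 P) := by
  refine ⟨?_, ?_⟩
  · rintro _ (⟨S, hS, rfl⟩ | ⟨p, hp, rfl⟩)
    · rw [finrank_prod_self, h𝒮.1 S hS]
    · rw [finrank_lineTensor (hP.ne_zero hp), hW]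
  · rintro _ (⟨S, hS, rfl⟩ | ⟨p, hp, rfl⟩)
    · obtain ⟨g, hg⟩ := h𝒮.2 S hS
      exact ⟨g.prodCongr g, isMSRWitness_prodCongr hg P⟩
    · obtain ⟨M, hM, hmove, hfix⟩ := hP p hp
      exact ⟨blockEquiv M hM, isMSRWitness_blockEquiv hM hmove hfix 𝒮⟩

lemma ncard_tensorFamily [Nontrivial W] {𝒮 : Set (Submodule F W)} (h𝒮 : 𝒮.Finite)
    (hbot : ⊥ ∉ 𝒮) {P : Set (Fin 2 → F)} (hPfin : P.Finite) (hP : IsMSRPointFamily P) :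
    (tensorFamily 𝒮 P).ncard = 𝒮.ncard + P.ncard := by
  have hdisj : Disjoint ((fun S => S.prod S) '' 𝒮) (lineTensor W '' P) := by
    rw [Set.disjoint_left]
    rintro _ ⟨S, hS, rfl⟩ ⟨p, -, hpS⟩
    exact prod_self_ne_lineTensor (ne_of_mem_of_not_mem hS hbot) p hpS.symm
  rw [tensorFamily, Set.ncard_union_eq hdisj (h𝒮.image _) (hPfin.image _),
    Set.ncard_image_of_injective _ prod_self_injective, hP.injOn_lineTensor.ncard_image]

lemma exists_ne_zero_ne_one [Fintype F] (hq : 3 ≤ Fintype.card F) : ∃ α : F, α ≠ 0 ∧ α ≠ 1 := by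
  classical
  obtain ⟨α, -, hα⟩ := Finset.exists_mem_notMem_of_card_lt_card (s := ({0, 1} : Finset F))
    (t := Finset.univ) (Finset.card_le_two.trans_lt (by rw [Finset.card_univ]; omega))
  exact ⟨α, by simpa [not_or] using hα⟩

end

/-- The recursive (tensor/block) construction: if `S₁, …, S_k` is an MSR subspace family of
`m`-spaces of `W = F_q^{2m}` witnessed by invertible maps `g₁, …, g_k`, then, identifying
`F_q^{4m}` with `W × W` (the map `h : eᵢ ↦ e_{i+2m}` being the swap of the two factors, so
that `Sᵢ + Sᵢ^h = Sᵢ × Sᵢ`), the family consisting of the subspaces `Sᵢ × Sᵢ` (with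
witnesses `diag(gᵢ,gᵢ)`) together with `W × 0 = ⟨e₁,…,e_{2m}⟩`, `0 × W = ⟨e_{2m+1},…,e_{4m}⟩`
and the diagonal `⟨e₁+e_{2m+1},…,e_{2m}+e_{4m}⟩` (with the block-matrix witnesses
`[[I,0],[αI,(1-α)I]]`, `[[(1-α⁻¹)I,α⁻¹I],[0,I]]`, `[[I,0],[0,αI]]` for `α ∈ F_q \ {0,1}`,
`q ≥ 3`) is an MSR subspace family of `2m`-spaces of `F_q^{4m}` of size `k + 3`. -/
theorem stmt8 (F : Type*) [Field F] [Fintype F] (hq : 3 ≤ Fintype.card F)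
    (m k : ℕ) (hm : 1 ≤ m)
    (S : Fin k → Submodule F (Fin (2 * m) → F)) (hinj : Function.Injective S)
    (hdim : ∀ i, finrank F (S i) = m)
    (g : Fin k → ((Fin (2 * m) → F) ≃ₗ[F] (Fin (2 * m) → F)))
    (hwit : ∀ i, (S i).map ((g i) : (Fin (2 * m) → F) →ₗ[F] (Fin (2 * m) → F)) ⊓ S i = ⊥ ∧
      ∀ j, j ≠ i → (S j).map ((g i) : (Fin (2 * m) → F) →ₗ[F] (Fin (2 * m) → F)) = S j) :
    let W := Fin (2 * m) → F
    let 𝒮' : Set (Submodule F (W × W)) :=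
      (Set.range fun i => (S i).prod (S i)) ∪
        {Submodule.prod (⊤ : Submodule F W) (⊥ : Submodule F W),
         Submodule.prod (⊥ : Submodule F W) (⊤ : Submodule F W),
         LinearMap.range ((LinearMap.id : W →ₗ[F] W).prod (LinearMap.id : W →ₗ[F] W))}
    IsMSRFamily (2 * m) 𝒮' ∧ 𝒮'.ncard = k + 3 := by
  intro W 𝒮'
  have : Nonempty (Fin (2 * m)) := ⟨⟨0, by omega⟩⟩
  obtain ⟨α, hα0, hα1⟩ := exists_ne_zero_ne_one hq
  have hP := isMSRPointFamily_of_ne_zero_ne_one hα0 hα1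
  have h𝒮 : IsMSRFamily m (Set.range S) := by
    refine ⟨Set.forall_mem_range.mpr hdim, Set.forall_mem_range.mpr fun i => ⟨g i, (hwit i).1, ?_⟩⟩
    rintro _ ⟨j, rfl⟩ hne
    exact (hwit i).2 j fun h => hne (h ▸ rfl)
  have hbot : ⊥ ∉ Set.range S := by
    rintro ⟨i, hi⟩
    have := hdim i
    rw [hi, finrank_bot] at this
    omega
  have h𝒮' : 𝒮' = tensorFamily (Set.range S) {![1, 0], ![0, 1], ![1, 1]} := by
    rw [tensorFamily, ← Set.range_comp, Set.image_insert_eq, Set.image_insert_eq,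
      Set.image_singleton, lineTensor_one_zero, lineTensor_zero_one, lineTensor_one_one]
    rfl
  rw [h𝒮']
  refine ⟨h𝒮.tensorFamily (by simp) hP, ?_⟩
  rw [ncard_tensorFamily (Set.finite_range S) hbot (Set.toFinite _) hP,
    Set.ncard_range_of_injective hinj, ncard_three_points, Nat.card_eq_fintype_card,
    Fintype.card_fin]
end

section
/- Given three pairwise disjoint 2-dimensional subspaces S_1, S_2, S_3 of F_q^4, there are exactly q+1 two-dimensional subspaces that intersect each of S_1, S_2, S_3 in a 1-dimensional subspace. -/
open Submodule Module

/-- A transversal line of three 2-spaces `S₁, S₂, S₃`: a 2-space meeting each `Sᵢ`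
in a 1-dimensional subspace. -/
def IsTransversal {F V : Type*} [Field F] [AddCommGroup V] [Module F V]
    (S₁ S₂ S₃ L : Submodule F V) : Prop :=
  finrank F L = 2 ∧ finrank F ↥(L ⊓ S₁) = 1 ∧ finrank F ↥(L ⊓ S₂) = 1 ∧
    finrank F ↥(L ⊓ S₃) = 1

/-!
Since `S₁ ⊕ S₂ = F⁴`, every `z ∈ S₃` splits as `z = z₁ + z₂` with `zᵢ ∈ Sᵢ`, and both parts
are nonzero when `z` is. A transversal `L` through `z` is spanned by its points on `S₁` and `S₂`,
so it contains `z₁` and `z₂`, hence `L = ⟨z₁, z₂⟩`; conversely `⟨z₁, z₂⟩` is a transversal. Thus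
`L ↦ L ∩ S₃` is a bijection from the transversals onto the `q + 1` points of the projective
line `ℙ(S₃)`.
-/

section

variable {F V : Type*} [Field F] [AddCommGroup V] [Module F V]

lemma exists_mem_ne_zero_of_finrank_eq_one {W : Submodule F V} (hW : finrank F W = 1) :
    ∃ z ∈ W, z ≠ 0 :=
  (Submodule.ne_bot_iff W).1 fun h => by rw [h, finrank_bot] at hW; exact zero_ne_one hW

lemma projection_ne_zero_of_disjoint {p q S : Submodule F V} (hpq : IsCompl p q)
    (hqS : Disjoint q S) {z : V} (hz : z ∈ S) (hz0 : z ≠ 0) : p.projection q hpq z ≠ 0 :=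
  fun h => hz0 (disjoint_def.1 hqS z ((projection_apply_eq_zero_iff hpq).1 h) hz)

lemma projection_mem_of_mem_sup_inf {p q : Submodule F V} (hpq : IsCompl p q)
    {L : Submodule F V} {x : V} (hx : x ∈ L ⊓ p ⊔ L ⊓ q) : p.projection q hpq x ∈ L := by
  obtain ⟨a, ha, b, hb, rfl⟩ := mem_sup.1 hx
  rw [map_add, projection_apply_of_mem_left hpq ha.2, projection_apply_of_mem_right hpq hb.2,
    add_zero]
  exact ha.1

lemma mem_span_projection_pair {p q : Submodule F V} (hpq : IsCompl p q) (x : V) :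
    x ∈ span F {p.projection q hpq x, q.projection p hpq.symm x} := by
  have h := add_mem (subset_span (Set.mem_insert _ _) :
    p.projection q hpq x ∈ span F {p.projection q hpq x, q.projection p hpq.symm x})
    (subset_span (Set.mem_insert_of_mem _ rfl))
  rwa [projection_add_projection_eq_self] at h

end

section FiniteDimensional

variable {F V : Type*} [Field F] [AddCommGroup V] [Module F V] [FiniteDimensional F V]

lemma eq_span_singleton_of_finrank_eq_one {W : Submodule F V} (hW : finrank F W = 1) {z : V}
    (hz : z ∈ W) (hz0 : z ≠ 0) : W = span F {z} :=
  (eq_of_le_of_finrank_eq ((span_singleton_le_iff_mem _ _).2 hz)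
    (by rw [finrank_span_singleton hz0, hW])).symm

lemma finrank_span_pair_of_disjoint {S T : Submodule F V} (hST : Disjoint S T) {u w : V}
    (hu : u ∈ S) (hw : w ∈ T) (hu0 : u ≠ 0) (hw0 : w ≠ 0) : finrank F (span F {u, w}) = 2 := by
  have hw' : w ∉ span F {u} := fun h =>
    hw0 (disjoint_def.1 hST w ((span_singleton_le_iff_mem _ _).2 hu h) hw)
  rw [span_insert, finrank_sup_span_singleton hw', finrank_span_singleton hu0]

lemma finrank_inf_eq_one_of_disjoint {L S T : Submodule F V} (hL : finrank F L = 2)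
    (hST : Disjoint S T) (hS : L ⊓ S ≠ ⊥) (hT : L ⊓ T ≠ ⊥) : finrank F ↥(L ⊓ S) = 1 := by
  have hsum := finrank_sup_add_finrank_inf_eq (L ⊓ S) (L ⊓ T)
  have hle : finrank F ↥(L ⊓ S ⊔ L ⊓ T) ≤ finrank F L :=
    finrank_mono (sup_le inf_le_left inf_le_left)
  rw [(hST.mono inf_le_right inf_le_right).eq_bot, finrank_bot] at hsum
  have hS' := mt Submodule.finrank_eq_zero.1 hS
  have hT' := mt Submodule.finrank_eq_zero.1 hT
  omega

lemma sup_inf_eq_of_finrank_inf_eq_one {L S T : Submodule F V} (hL : finrank F L = 2)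
    (hST : Disjoint S T) (hS : finrank F ↥(L ⊓ S) = 1) (hT : finrank F ↥(L ⊓ T) = 1) :
    L ⊓ S ⊔ L ⊓ T = L := by
  refine eq_of_le_of_finrank_eq (sup_le inf_le_left inf_le_left) ?_
  have hsum := finrank_sup_add_finrank_inf_eq (L ⊓ S) (L ⊓ T)
  rw [(hST.mono inf_le_right inf_le_right).eq_bot, finrank_bot] at hsum
  omega

end FiniteDimensional

section

variable {F V : Type*} [Field F] [AddCommGroup V] [Module F V] [FiniteDimensional F V]
  {S₁ S₂ S₃ : Submodule F V} (hc : IsCompl S₁ S₂) (h13 : Disjoint S₁ S₃) (h23 : Disjoint S₂ S₃)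
include hc h13 h23

lemma isTransversal_span_projection_pair {z : V} (hz : z ∈ S₃) (hz0 : z ≠ 0) :
    IsTransversal S₁ S₂ S₃ (span F {S₁.projection S₂ hc z, S₂.projection S₁ hc.symm z}) := by
  set L := span F {S₁.projection S₂ hc z, S₂.projection S₁ hc.symm z}
  have hz₁ := projection_ne_zero_of_disjoint hc h23 hz hz0
  have hz₂ := projection_ne_zero_of_disjoint hc.symm h13 hz hz0
  have hL : finrank F L = 2 :=
    finrank_span_pair_of_disjoint hc.disjoint (projection_apply_mem _ _)
      (projection_apply_mem _ _) hz₁ hz₂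
  have hL₁ : L ⊓ S₁ ≠ ⊥ :=
    (Submodule.ne_bot_iff _).2 ⟨_, ⟨subset_span (by simp), projection_apply_mem _ _⟩, hz₁⟩
  have hL₂ : L ⊓ S₂ ≠ ⊥ :=
    (Submodule.ne_bot_iff _).2 ⟨_, ⟨subset_span (by simp), projection_apply_mem _ _⟩, hz₂⟩
  have hL₃ : L ⊓ S₃ ≠ ⊥ := (Submodule.ne_bot_iff _).2 ⟨z, ⟨mem_span_projection_pair hc z, hz⟩, hz0⟩
  exact ⟨hL, finrank_inf_eq_one_of_disjoint hL hc.disjoint hL₁ hL₂,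
    finrank_inf_eq_one_of_disjoint hL hc.disjoint.symm hL₂ hL₁,
    finrank_inf_eq_one_of_disjoint hL h13.symm hL₃ hL₁⟩

lemma IsTransversal.eq_span_projection_pair {L : Submodule F V} (hL : IsTransversal S₁ S₂ S₃ L)
    {z : V} (hzL : z ∈ L) (hz : z ∈ S₃) (hz0 : z ≠ 0) :
    L = span F {S₁.projection S₂ hc z, S₂.projection S₁ hc.symm z} := by
  have hsup : z ∈ L ⊓ S₁ ⊔ L ⊓ S₂ := by
    rwa [sup_inf_eq_of_finrank_inf_eq_one hL.1 hc.disjoint hL.2.1 hL.2.2.1]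
  have hle : span F {S₁.projection S₂ hc z, S₂.projection S₁ hc.symm z} ≤ L := by
    rw [span_le, Set.insert_subset_iff, Set.singleton_subset_iff]
    exact ⟨projection_mem_of_mem_sup_inf hc hsup,
      projection_mem_of_mem_sup_inf hc.symm (sup_comm (L ⊓ S₁) _ ▸ hsup)⟩
  exact (eq_of_le_of_finrank_eq hle ((isTransversal_span_projection_pair hc h13 h23 hz hz0).1.trans
    hL.1.symm)).symm

lemma ncard_setOf_isTransversal :
    {L : Submodule F V | IsTransversal S₁ S₂ S₃ L}.ncard =
      {W : Submodule F V | W ≤ S₃ ∧ finrank F W = 1}.ncard := by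
  refine Set.ncard_congr (fun L _ => L ⊓ S₃) (fun L hL => ⟨inf_le_right, hL.2.2.2⟩) ?_ ?_
  · intro L L' hL hL' hLL'
    obtain ⟨z, hz, hz0⟩ := exists_mem_ne_zero_of_finrank_eq_one hL.2.2.2
    have hz' : z ∈ L' ⊓ S₃ := hLL' ▸ hz
    rw [hL.eq_span_projection_pair hc h13 h23 hz.1 hz.2 hz0,
      IsTransversal.eq_span_projection_pair hc h13 h23 hL' hz'.1 hz'.2 hz0]
  · rintro W ⟨hWS₃, hW⟩
    obtain ⟨z, hz, hz0⟩ := exists_mem_ne_zero_of_finrank_eq_one hW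
    have hL := isTransversal_span_projection_pair hc h13 h23 (hWS₃ hz) hz0
    refine ⟨_, hL, ?_⟩
    rw [eq_span_singleton_of_finrank_eq_one hL.2.2.2 ⟨mem_span_projection_pair hc z, hWS₃ hz⟩ hz0,
      eq_span_singleton_of_finrank_eq_one hW hz hz0]

end

lemma ncard_setOf_le_finrank_eq_one {F V : Type*} [Field F] [AddCommGroup V] [Module F V]
    (S : Submodule F V) :
    {W : Submodule F V | W ≤ S ∧ finrank F W = 1}.ncard =
      Nat.card {H : Submodule F S // finrank F H = 1} := by
  rw [← Nat.card_coe_set_eq]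
  exact Nat.card_congr (((MapSubtype.orderIso S).toEquiv.subtypeEquiv fun H => by
    rw [← finrank_map_subtype_eq S H]; rfl).trans
      (Equiv.subtypeSubtypeEquivSubtypeInter _ _)).symm

/-- Given three pairwise disjoint 2-dimensional subspaces of `F_q^4`, there are exactly
`q + 1` two-dimensional subspaces meeting each of them in a 1-dimensional subspace. -/
theorem stmt11 (F : Type*) [Field F] [Fintype F]
    (S₁ S₂ S₃ : Submodule F (Fin 4 → F))
    (h₁ : finrank F S₁ = 2) (h₂ : finrank F S₂ = 2) (h₃ : finrank F S₃ = 2)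
    (h12 : S₁ ⊓ S₂ = ⊥) (h13 : S₁ ⊓ S₃ = ⊥) (h23 : S₂ ⊓ S₃ = ⊥) :
    {L : Submodule F (Fin 4 → F) | IsTransversal S₁ S₂ S₃ L}.ncard =
      Fintype.card F + 1 := by
  have hc : IsCompl S₁ S₂ :=
    (isCompl_iff_disjoint S₁ S₂ (by simp [h₁, h₂])).2 (disjoint_iff.2 h12)
  rw [ncard_setOf_isTransversal hc (disjoint_iff.2 h13) (disjoint_iff.2 h23),
    ncard_setOf_le_finrank_eq_one, ← Nat.card_congr (Projectivization.equivSubmodule F S₃),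
    Projectivization.card_of_finrank_two F S₃ h₃, Nat.card_eq_fintype_card]
end

section
/- In an MSR subspace family of 2-spaces in F_q^4, no three members pass through a common 1-dimensional subspace. -/
open Submodule Module

/-- In an MSR subspace family of 2-spaces of `F_q^4`, no three (pairwise distinct)
members pass through a common point (1-dimensional subspace). -/
theorem stmt12 (F : Type*) [Field F] [Fintype F]
    (𝒮 : Set (Submodule F (Fin 4 → F))) (h : IsMSRFamily 2 𝒮) :
    ∀ T₁ ∈ 𝒮, ∀ T₂ ∈ 𝒮, ∀ T₃ ∈ 𝒮, T₁ ≠ T₂ → T₁ ≠ T₃ → T₂ ≠ T₃ →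
      ∀ P : Submodule F (Fin 4 → F), finrank F P = 1 →
        ¬(P ≤ T₁ ∧ P ≤ T₂ ∧ P ≤ T₃) := by
  intro T₁ h1 T₂ h2 T₃ h3 h12 h13 h23 P hP ⟨hP1, hP2, hP3⟩
  obtain ⟨hdim, hg⟩ := h
  obtain ⟨g, hg0, hgfix⟩ := hg T₃ h3
  -- P = T₁ ⊓ T₂
  have hle : P ≤ T₁ ⊓ T₂ := le_inf hP1 hP2
  have hlt : T₁ ⊓ T₂ < T₁ := inf_lt_left.mpr (fun hle => h12 (Submodule.eq_of_le_of_finrank_le hle (((hdim T₂ h2).trans (hdim T₁ h1).symm)).le))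
  have hfin : finrank F ↥(T₁ ⊓ T₂) < 2 := by
    have := Submodule.finrank_lt_finrank_of_lt hlt
    rwa [hdim T₁ h1] at this
  have hge : 1 ≤ finrank F ↥(T₁ ⊓ T₂) := hP ▸ Submodule.finrank_mono hle
  have hPeq : P = T₁ ⊓ T₂ := Submodule.eq_of_le_of_finrank_eq hle (by omega)
  have hmap : P.map (g : (Fin 4 → F) →ₗ[F] (Fin 4 → F)) = P := by
    have e1 := hgfix T₁ h1 h13
    have e2 := hgfix T₂ h2 h23
    rw [hPeq, Submodule.map_inf (g : (Fin 4 → F) →ₗ[F] (Fin 4 → F)) g.injective, e1, e2]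
  have : P ≤ T₃.map (g : (Fin 4 → F) →ₗ[F] (Fin 4 → F)) ⊓ T₃ :=
    le_inf (hmap ▸ Submodule.map_mono hP3) hP3
  rw [hg0] at this
  have : P = ⊥ := le_bot_iff.mp this
  rw [this, finrank_bot] at hP
  exact one_ne_zero hP.symm
end

section
/- In an MSR subspace family of 2-spaces in F_q^4, no three members can lie in a common 3-dimensional subspace (hyperplane). -/
open Submodule Module

/-- In an MSR subspace family of 2-spaces of `F_q^4`, no three (pairwise distinct)
members lie in a common 3-dimensional subspace (hyperplane). -/
theorem stmt13 (F : Type*) [Field F] [Fintype F]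
    (𝒮 : Set (Submodule F (Fin 4 → F))) (h : IsMSRFamily 2 𝒮) :
    ∀ T₁ ∈ 𝒮, ∀ T₂ ∈ 𝒮, ∀ T₃ ∈ 𝒮, T₁ ≠ T₂ → T₁ ≠ T₃ → T₂ ≠ T₃ →
      ∀ H : Submodule F (Fin 4 → F), finrank F H = 3 →
        ¬(T₁ ≤ H ∧ T₂ ≤ H ∧ T₃ ≤ H) := by
  intro T₁ h₁ T₂ h₂ T₃ h₃ h12 h13 h23 H hH ⟨le1, le2, le3⟩
  obtain ⟨hdim, hmov⟩ := h
  obtain ⟨g, hg0, hgfix⟩ := hmov T₁ h₁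
  -- T₂ ⊔ T₃ = H
  have hdim2 : finrank F T₂ = 2 := hdim T₂ h₂
  have hdim3 : finrank F T₃ = 2 := hdim T₃ h₃
  have hdim1 : finrank F T₁ = 2 := hdim T₁ h₁
  have hlt : T₂ < T₂ ⊔ T₃ := by
    refine lt_of_le_of_ne le_sup_left fun he => h23 ?_
    have h32 : T₃ ≤ T₂ := he ▸ le_sup_right
    exact (Submodule.eq_of_le_of_finrank_eq h32 (by rw [hdim3, hdim2])).symm
  have hsup_le : T₂ ⊔ T₃ ≤ H := sup_le le2 le3
  have h3le : 3 ≤ finrank F ↥(T₂ ⊔ T₃) := by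
    have := Submodule.finrank_lt_finrank_of_lt hlt
    omega
  have hsup_eq : T₂ ⊔ T₃ = H := by
    apply Submodule.eq_of_le_of_finrank_eq hsup_le
    have hle3 : finrank F ↥(T₂ ⊔ T₃) ≤ 3 := hH ▸ Submodule.finrank_mono hsup_le
    omega
  -- g fixes H
  have hHfix : H.map (g : (Fin 4 → F) →ₗ[F] (Fin 4 → F)) = H := by
    rw [← hsup_eq, Submodule.map_sup, hgfix T₂ h₂ (Ne.symm h12), hgfix T₃ h₃ (Ne.symm h13)]
  set T₁' := T₁.map (g : (Fin 4 → F) →ₗ[F] (Fin 4 → F)) with hT₁'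
  have hT₁'le : T₁' ≤ H := by
    rw [← hHfix]; exact Submodule.map_mono le1
  have hdim1' : finrank F T₁' = 2 := by
    rw [hT₁', LinearEquiv.finrank_map_eq]; exact hdim1
  have hsup : finrank F ↥(T₁' ⊔ T₁) + finrank F ↥(T₁' ⊓ T₁) =
      finrank F T₁' + finrank F T₁ := Submodule.finrank_sup_add_finrank_inf_eq T₁' T₁
  have hsle : finrank F ↥(T₁' ⊔ T₁) ≤ 3 := hH ▸ Submodule.finrank_mono (sup_le hT₁'le le1)
  have : finrank F ↥(T₁' ⊓ T₁) = 0 := by rw [hg0]; exact finrank_bot F _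
  omega
end

section
/- Let S_1, S_2, S_3, S_4 be pairwise disjoint 2-spaces of F_q^4 with S_4 disjoint from the point set of the regulus R(S_1,S_2,S_3). Then the joint stabilizer U = Stab({S_1,S_2,S_3,S_4}) in PGL(4,q) acts regularly on the q+1 three-dimensional subspaces containing S_4. -/
open Submodule Module

/-- Membership in the regulus `R(S₁,S₂,S₃)`: a 2-space meeting every transversal line of
`S₁, S₂, S₃` in a point. -/
def InRegulus {F V : Type*} [Field F] [AddCommGroup V] [Module F V]
    (S₁ S₂ S₃ T : Submodule F V) : Prop :=
  finrank F T = 2 ∧ ∀ L, IsTransversal S₁ S₂ S₃ L → finrank F ↥(T ⊓ L) = 1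


/-!
Write `V = S₁ ⊕ S₂`. Then `S₃` and `S₄` are the graphs `{a + φ a}` and `{a + ψ a}` of
isomorphisms `φ, ψ : S₁ → S₂`, and the graph of every `c • φ` lies in the regulus
`R(S₁, S₂, S₃)`: it meets each transversal `L = (L ∩ S₁) ⊕ (L ∩ S₂)` in a point. So `S₄` missing
the regulus says that `M = φ⁻¹ψ` has no eigenvector on the plane `S₁`, hence `x, M x` is a basis
of `S₁` for every `x ≠ 0`.

An element of the joint stabilizer acts on `S₁` by some `κ` commuting with `M` and on `S₂` by
`φ κ φ⁻¹`; conversely every such `κ` extends to the stabilizer. A `κ` commuting with `M` is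
determined by `κ x`, and `a + b M` sends `x` to any prescribed `a x + b M x`. Finally a 3-space
`H ⊇ S₄` equals `S₄ ⊕ (H ∩ S₁)`, so it is determined by the point `H ∩ S₁`, and the statement
becomes regularity of this action on the points of `S₁`.
-/

namespace Module.End

variable {F W : Type*} [Field F] [AddCommGroup W] [Module F W] {f : Module.End F W}

theorem linearIndependent_pair_apply (hf : ∀ (w : W) (c : F), f w = c • w → w = 0) {x : W}
    (hx : x ≠ 0) : LinearIndependent F ![x, f x] := by
  refine LinearIndependent.pair_iff.2 fun s t hst => ?_
  by_cases ht : t = 0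
  · subst ht
    rw [zero_smul, add_zero, smul_eq_zero] at hst
    exact ⟨hst.resolve_right hx, rfl⟩
  · refine absurd (hf x (-(t⁻¹ * s)) (smul_right_injective W ht ?_)) hx
    dsimp only
    rw [smul_smul, mul_neg, ← mul_assoc, mul_inv_cancel₀ ht, one_mul, neg_smul,
      eq_neg_iff_add_eq_zero, add_comm, hst]

theorem span_pair_apply_eq_top (hW : finrank F W = 2)
    (hf : ∀ (w : W) (c : F), f w = c • w → w = 0) {x : W} (hx : x ≠ 0) :
    span F {x, f x} = ⊤ := by
  rw [← Matrix.range_cons_cons_empty x (f x) ![]]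
  exact (linearIndependent_pair_apply hf hx).span_eq_top_of_card_eq_finrank (by simp [hW])

theorem eq_of_commute_of_apply_eq (hW : finrank F W = 2)
    (hf : ∀ (w : W) (c : F), f w = c • w → w = 0) {x : W} (hx : x ≠ 0) {g₁ g₂ : Module.End F W}
    (h₁ : Commute g₁ f) (h₂ : Commute g₂ f) (hx' : g₁ x = g₂ x) : g₁ = g₂ := by
  refine LinearMap.ext_on (span_pair_apply_eq_top hW hf hx) ?_
  rintro _ (rfl | rfl)
  · exact hx'
  · change (g₁ * f) x = (g₂ * f) x
    rw [h₁.eq, h₂.eq, mul_apply, mul_apply, hx']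

theorem exists_commute_apply_eq (hW : finrank F W = 2)
    (hf : ∀ (w : W) (c : F), f w = c • w → w = 0) {x y : W} (hx : x ≠ 0) (hy : y ≠ 0) :
    ∃ κ : W ≃ₗ[F] W, Commute (κ : Module.End F W) f ∧ κ x = y := by
  have : FiniteDimensional F W := Module.finite_of_finrank_eq_succ hW
  obtain ⟨a, b, hab⟩ := mem_span_pair.1 ((span_pair_apply_eq_top hW hf hx).ge (mem_top (x := y)))
  set κ : Module.End F W := a • 1 + b • f
  have hinj : Function.Injective κ := by
    refine (injective_iff_map_eq_zero κ).2 fun w hw => by_contra fun hw0 => hy ?_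
    obtain ⟨rfl, rfl⟩ := LinearIndependent.pair_iff.1 (linearIndependent_pair_apply hf hw0) a b hw
    simp [← hab]
  refine ⟨LinearEquiv.ofInjectiveEndo κ hinj, ?_, hab⟩
  change Commute κ f
  simp only [κ, Commute.add_left, (Commute.one_left f).smul_left, (Commute.refl f).smul_left]

end Module.End

namespace Submodule

variable {F V : Type*} [Field F] [AddCommGroup V] [Module F V]

section Graph

variable {p q : Submodule F V}

def graphOf (φ : p →ₗ[F] q) : Submodule F V :=
  LinearMap.range (p.subtype + q.subtype ∘ₗ φ)

theorem mem_graphOf {φ : p →ₗ[F] q} {v : V} : v ∈ graphOf φ ↔ ∃ a : p, (a : V) + φ a = v :=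
  Iff.rfl

theorem add_mem_graphOf (φ : p →ₗ[F] q) (a : p) : (a : V) + φ a ∈ graphOf φ :=
  ⟨a, rfl⟩

theorem eq_and_eq_of_add_eq_add (h : Disjoint p q) {a a' b b' : V} (ha : a ∈ p) (ha' : a' ∈ p)
    (hb : b ∈ q) (hb' : b' ∈ q) (hab : a + b = a' + b') : a = a' ∧ b = b' := by
  have hmem : a - a' ∈ p ⊓ q :=
    ⟨sub_mem ha ha', by
      rw [show a - a' = b' - b by rw [sub_eq_sub_iff_add_eq_add, hab, add_comm]]
      exact sub_mem hb' hb⟩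
  rw [h.eq_bot, mem_bot, sub_eq_zero] at hmem
  subst hmem
  exact ⟨rfl, add_left_cancel hab⟩

theorem graphOf_inf_right_eq_bot (h : Disjoint p q) (φ : p →ₗ[F] q) : graphOf φ ⊓ q = ⊥ := by
  refine eq_bot_iff.2 ?_
  rintro v ⟨hv, hvq⟩
  obtain ⟨a, rfl⟩ := mem_graphOf.1 hv
  have := eq_and_eq_of_add_eq_add h a.2 (zero_mem p) (φ a).2 hvq (zero_add _).symm
  obtain rfl : a = 0 := Subtype.ext this.1
  simp

theorem finrank_graphOf (h : Disjoint p q) (φ : p →ₗ[F] q) :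
    finrank F (graphOf φ) = finrank F p :=
  LinearMap.finrank_range_of_inj fun a a' haa' =>
    Subtype.ext (eq_and_eq_of_add_eq_add h a.2 a'.2 (φ a).2 (φ a').2 haa').1

theorem exists_graphOf_eq (hpq : IsCompl p q) {S : Submodule F V} (hS : IsCompl S q) :
    ∃ φ : p →ₗ[F] q, graphOf φ = S := by
  -- `a + φ a` is the projection of `a` onto `S` along `q`
  refine ⟨-(q.projectionOnto S hS.symm ∘ₗ p.subtype), le_antisymm ?_ fun s hs => ?_⟩
  · rintro _ ⟨a, rfl⟩
    simp [coe_projectionOnto_apply, projection_eq_self_sub_projection hS]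
  · obtain ⟨a, b, hab, -⟩ := existsUnique_add_of_isCompl hpq s
    refine ⟨a, ?_⟩
    have hs' : q.projection S hS.symm s = 0 := by simpa using hs
    have : q.projection S hS.symm (a : V) = -b := by
      rw [show (a : V) = s - b by rw [← hab]; abel, map_sub, hs', projection_apply_left,
        zero_sub]
    simp [coe_projectionOnto_apply, this, ← hab]

theorem exists_linearEquiv_graphOf_eq (hpq : IsCompl p q) {S : Submodule F V}
    (hSq : IsCompl S q) (hSp : IsCompl S p) : ∃ φ : p ≃ₗ[F] q, graphOf (φ : p →ₗ[F] q) = S := by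
  obtain ⟨φ, rfl⟩ := exists_graphOf_eq hpq hSq
  refine ⟨LinearEquiv.ofBijective φ ⟨?_, fun b => ?_⟩, rfl⟩
  · refine (injective_iff_map_eq_zero φ).2 fun a ha => ?_
    have : (a : V) ∈ graphOf φ ⊓ p := ⟨mem_graphOf.2 ⟨a, by simp [ha]⟩, a.2⟩
    simpa [hSp.inf_eq_bot] using this
  · obtain ⟨s, a', hsum, -⟩ := existsUnique_add_of_isCompl hSp (b : V)
    obtain ⟨a, ha⟩ := mem_graphOf.1 s.2
    have := eq_and_eq_of_add_eq_add hpq.disjoint (add_mem a.2 a'.2) (zero_mem p) (φ a).2 b.2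
      (by rw [zero_add, ← hsum, ← ha]; abel)
    exact ⟨a, Subtype.ext this.2⟩

end Graph

section Regulus

variable {p q L : Submodule F V}

theorem mem_and_mem_of_add_mem (h : Disjoint p q) (hL : L ⊓ p ⊔ L ⊓ q = L) {a b : V}
    (ha : a ∈ p) (hb : b ∈ q) (hab : a + b ∈ L) : a ∈ L ∧ b ∈ L := by
  rw [← hL] at hab
  obtain ⟨a', ha', b', hb', hsum⟩ := mem_sup.1 hab
  obtain ⟨rfl, rfl⟩ := eq_and_eq_of_add_eq_add h ha'.2 ha hb'.2 hb hsum
  exact ⟨ha'.1, hb'.1⟩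

variable [FiniteDimensional F V]

theorem inf_sup_inf_eq_of_finrank_add (h : Disjoint p q)
    (hL : finrank F ↥(L ⊓ p) + finrank F ↥(L ⊓ q) = finrank F L) : L ⊓ p ⊔ L ⊓ q = L := by
  refine eq_of_le_of_finrank_eq (sup_le inf_le_left inf_le_left) ?_
  have := finrank_sup_add_finrank_inf_eq (L ⊓ p) (L ⊓ q)
  rw [(h.mono inf_le_right inf_le_right).eq_bot, finrank_bot] at this
  omega

theorem exists_mem_ne_zero_of_finrank_eq_one {W : Submodule F V} (h : finrank F W = 1) :
    ∃ x ∈ W, x ≠ 0 :=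
  exists_mem_ne_zero_of_ne_bot (one_le_finrank_iff.1 h.ge)

theorem finrank_graphOf_smul_inf_eq_one (h : Disjoint p q) (φ : p →ₗ[F] q) (c : F)
    (hL : IsTransversal p q (graphOf φ) L) : finrank F ↥(graphOf (c • φ) ⊓ L) = 1 := by
  obtain ⟨hL2, hLp, hLq, hLφ⟩ := hL
  have hdec : L ⊓ p ⊔ L ⊓ q = L := inf_sup_inf_eq_of_finrank_add h (by omega)
  obtain ⟨_, ⟨huL, hu⟩, hu0⟩ := exists_mem_ne_zero_of_finrank_eq_one hLφ
  obtain ⟨a, rfl⟩ := mem_graphOf.1 hu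
  obtain ⟨haL, hφaL⟩ := mem_and_mem_of_add_mem h hdec a.2 (φ a).2 huL
  obtain ⟨b, ⟨hbL, hbq⟩, hb0⟩ := exists_mem_ne_zero_of_finrank_eq_one hLq
  -- `a + c • φ a` is a point of the intersection, and the point `b` of `L ∩ q` is not
  have hne : graphOf (c • φ) ⊓ L ≠ ⊥ := by
    refine (Submodule.ne_bot_iff _).2 ⟨a + c • φ a, ⟨add_mem_graphOf (c • φ) a,
      add_mem haL (smul_mem _ _ hφaL)⟩, fun h0 => hu0 ?_⟩
    have := eq_and_eq_of_add_eq_add h a.2 (zero_mem p) (c • φ a).2 (zero_mem q)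
      (by rw [add_zero]; exact h0)
    obtain rfl : a = 0 := Subtype.ext this.1
    simp
  have hlt : graphOf (c • φ) ⊓ L < L := by
    refine lt_of_le_of_ne inf_le_right fun heq => hb0 ?_
    have : b ∈ graphOf (c • φ) ⊓ q := ⟨(heq.symm ▸ hbL : b ∈ graphOf (c • φ) ⊓ L).1, hbq⟩
    rwa [graphOf_inf_right_eq_bot h, mem_bot] at this
  have := finrank_lt_finrank_of_lt hlt
  have := one_le_finrank_iff.2 hne
  omega

theorem inRegulus_graphOf_smul (h : Disjoint p q) (hp : finrank F p = 2) (φ : p →ₗ[F] q)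
    (c : F) : InRegulus p q (graphOf φ) (graphOf (c • φ)) :=
  ⟨(finrank_graphOf h _).trans hp, fun _ hL => finrank_graphOf_smul_inf_eq_one h φ c hL⟩

theorem eq_zero_of_symm_apply_eq_smul (h : Disjoint p q) (hp : finrank F p = 2)
    (φ : p ≃ₗ[F] q) (ψ : p →ₗ[F] q)
    (havoid : ∀ T, InRegulus p q (graphOf (φ : p →ₗ[F] q)) T → graphOf ψ ⊓ T = ⊥)
    (a : p) (c : F) (hψ : φ.symm (ψ a) = c • a) : a = 0 := by
  have : (a : V) + ψ a ∈ graphOf ψ ⊓ graphOf (c • (φ : p →ₗ[F] q)) := by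
    refine ⟨add_mem_graphOf ψ a, ?_⟩
    rw [← φ.apply_symm_apply (ψ a), hψ, map_smul]
    exact add_mem_graphOf (c • (φ : p →ₗ[F] q)) a
  rw [havoid _ (inRegulus_graphOf_smul h hp _ c), mem_bot] at this
  exact Subtype.ext (eq_and_eq_of_add_eq_add h a.2 (zero_mem p) (ψ a).2 (zero_mem q)
    (by rw [add_zero]; exact this)).1

end Regulus

theorem symm_apply_apply_mem_of_map_eq {V₂ : Type*} [AddCommGroup V₂] [Module F V₂]
    {g g' : V ≃ₗ[F] V₂} {S : Submodule F V} {T : Submodule F V₂}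
    (hg : S.map (g : V →ₗ[F] V₂) = T) (hg' : S.map (g' : V →ₗ[F] V₂) = T) {v : V}
    (hv : v ∈ S) : g.symm (g' v) ∈ S :=
  (mem_map_equiv _).1 (hg ▸ hg' ▸ mem_map_of_mem hv)

section Stabilizer

variable {S₁ S₂ : Submodule F V}

noncomputable def extendOfIsCompl (h12 : IsCompl S₁ S₂) (φ : S₁ ≃ₗ[F] S₂) (κ : S₁ ≃ₗ[F] S₁) :
    V ≃ₗ[F] V :=
  (prodEquivOfIsCompl S₁ S₂ h12).symm ≪≫ₗ κ.prodCongr (φ.symm ≪≫ₗ κ ≪≫ₗ φ) ≪≫ₗ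
    prodEquivOfIsCompl S₁ S₂ h12

section Extend

variable (h12 : IsCompl S₁ S₂) (φ : S₁ ≃ₗ[F] S₂) (κ : S₁ ≃ₗ[F] S₁)

theorem extendOfIsCompl_apply_left (a : S₁) : extendOfIsCompl h12 φ κ a = κ a := by
  simp [extendOfIsCompl]

theorem extendOfIsCompl_apply_right (b : S₂) :
    extendOfIsCompl h12 φ κ b = φ (κ (φ.symm b)) := by
  simp [extendOfIsCompl]

theorem map_extendOfIsCompl_left_le : S₁.map (extendOfIsCompl h12 φ κ : V →ₗ[F] V) ≤ S₁ := by
  rintro _ ⟨v, hv, rfl⟩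
  simpa using (extendOfIsCompl_apply_left h12 φ κ ⟨v, hv⟩).symm ▸ (κ ⟨v, hv⟩).2

theorem map_extendOfIsCompl_right_le : S₂.map (extendOfIsCompl h12 φ κ : V →ₗ[F] V) ≤ S₂ := by
  rintro _ ⟨v, hv, rfl⟩
  simpa using (extendOfIsCompl_apply_right h12 φ κ ⟨v, hv⟩).symm ▸ (φ (κ (φ.symm ⟨v, hv⟩))).2

theorem map_extendOfIsCompl_graphOf_le {χ : S₁ →ₗ[F] S₂}
    (hχ : ∀ a, φ (κ (φ.symm (χ a))) = χ (κ a)) :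
    (graphOf χ).map (extendOfIsCompl h12 φ κ : V →ₗ[F] V) ≤ graphOf χ := by
  rintro _ ⟨v, hv, rfl⟩
  obtain ⟨a, rfl⟩ := mem_graphOf.1 hv
  refine mem_graphOf.2 ⟨κ a, ?_⟩
  rw [LinearEquiv.coe_coe, map_add, extendOfIsCompl_apply_left, extendOfIsCompl_apply_right,
    hχ]

end Extend

theorem map_eq_of_map_le [FiniteDimensional F V] (e : V ≃ₗ[F] V) {S : Submodule F V}
    (h : S.map (e : V →ₗ[F] V) ≤ S) : S.map (e : V →ₗ[F] V) = S :=
  eq_of_le_of_finrank_eq h (LinearEquiv.finrank_map_eq e S)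

theorem exists_linearEquiv_map_eq_and_apply_eq [FiniteDimensional F V] (h12 : IsCompl S₁ S₂)
    (hS₁ : finrank F S₁ = 2) (φ : S₁ ≃ₗ[F] S₂) (ψ : S₁ →ₗ[F] S₂)
    (hM : ∀ (a : S₁) (c : F), φ.symm (ψ a) = c • a → a = 0) {x y : S₁} (hx : x ≠ 0)
    (hy : y ≠ 0) :
    ∃ g : V ≃ₗ[F] V, S₁.map (g : V →ₗ[F] V) = S₁ ∧ S₂.map (g : V →ₗ[F] V) = S₂ ∧
      (graphOf (φ : S₁ →ₗ[F] S₂)).map (g : V →ₗ[F] V) = graphOf (φ : S₁ →ₗ[F] S₂) ∧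
      (graphOf ψ).map (g : V →ₗ[F] V) = graphOf ψ ∧ g x = y := by
  obtain ⟨κ, hκM, hκx⟩ :=
    Module.End.exists_commute_apply_eq (f := (φ.symm : S₂ →ₗ[F] S₁) ∘ₗ ψ) hS₁ hM hx hy
  have hψ (a : S₁) : φ (κ (φ.symm (ψ a))) = ψ (κ a) := by
    have := LinearMap.congr_fun hκM.eq a
    simp only [Module.End.mul_apply, LinearMap.comp_apply, LinearEquiv.coe_coe] at this
    rw [this, LinearEquiv.apply_symm_apply]
  refine ⟨extendOfIsCompl h12 φ κ, map_eq_of_map_le _ (map_extendOfIsCompl_left_le h12 φ κ),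
    map_eq_of_map_le _ (map_extendOfIsCompl_right_le h12 φ κ),
    map_eq_of_map_le _ (map_extendOfIsCompl_graphOf_le h12 φ κ fun a => by simp),
    map_eq_of_map_le _ (map_extendOfIsCompl_graphOf_le h12 φ κ hψ), ?_⟩
  rw [extendOfIsCompl_apply_left, hκx]

theorem apply_coe_eq_coe_restrict (h : Disjoint S₁ S₂) {k : V →ₗ[F] V}
    (hk₁ : Set.MapsTo k S₁ S₁) (hk₂ : Set.MapsTo k S₂ S₂) {χ : S₁ →ₗ[F] S₂}
    (hkχ : Set.MapsTo k (graphOf χ) (graphOf χ)) (a : S₁) :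
    k (χ a) = χ (k.restrict hk₁ a) := by
  obtain ⟨a', ha'⟩ := mem_graphOf.1 (hkχ (add_mem_graphOf χ a))
  rw [map_add] at ha'
  obtain ⟨h1, h2⟩ := eq_and_eq_of_add_eq_add h a'.2 (hk₁ a.2) (χ a').2 (hk₂ (χ a).2) ha'
  rw [← h2, show a' = k.restrict hk₁ a from Subtype.ext h1]

theorem exists_eq_smul_of_mapsTo (h12 : IsCompl S₁ S₂) (hS₁ : finrank F S₁ = 2)
    (φ : S₁ ≃ₗ[F] S₂) (ψ : S₁ →ₗ[F] S₂) (hM : ∀ (a : S₁) (c : F), φ.symm (ψ a) = c • a → a = 0)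
    {k : V →ₗ[F] V} (hk₁ : Set.MapsTo k S₁ S₁) (hk₂ : Set.MapsTo k S₂ S₂)
    (hkφ : Set.MapsTo k (graphOf (φ : S₁ →ₗ[F] S₂)) (graphOf (φ : S₁ →ₗ[F] S₂)))
    (hkψ : Set.MapsTo k (graphOf ψ) (graphOf ψ)) {x : S₁} (hx : x ≠ 0)
    (hkx : k x ∈ span F {(x : V)}) : ∃ c : F, ∀ v, k v = c • v := by
  have hφ := apply_coe_eq_coe_restrict h12.disjoint hk₁ hk₂ hkφ
  have hψ := apply_coe_eq_coe_restrict h12.disjoint hk₁ hk₂ hkψ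
  simp only [LinearEquiv.coe_coe] at hφ
  set κ := k.restrict hk₁
  have hcomm : Commute κ ((φ.symm : S₂ →ₗ[F] S₁) ∘ₗ ψ) := by
    refine LinearMap.ext fun a => φ.injective (Subtype.ext ?_)
    simp only [Module.End.mul_apply, LinearMap.comp_apply, LinearEquiv.coe_coe,
      LinearEquiv.apply_symm_apply]
    rw [← hψ, ← hφ, LinearEquiv.apply_symm_apply]
  obtain ⟨c, hc⟩ := mem_span_singleton.1 hkx
  have hκ : κ = c • 1 := Module.End.eq_of_commute_of_apply_eq hS₁ hM hx hcomm
    ((Commute.one_left _).smul_left c) (Subtype.ext hc.symm)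
  have hkS₁ (a : S₁) : k a = c • a := congrArg Subtype.val (LinearMap.congr_fun hκ a)
  refine ⟨c, fun v => ?_⟩
  obtain ⟨a, b, rfl, -⟩ := existsUnique_add_of_isCompl h12 v
  obtain ⟨a', rfl⟩ := φ.surjective b
  rw [map_add, hkS₁, hφ, hκ, smul_add]
  simp

theorem exists_units_smul_of_map_eq (h12 : IsCompl S₁ S₂) (hS₁ : finrank F S₁ = 2)
    (φ : S₁ ≃ₗ[F] S₂) (ψ : S₁ →ₗ[F] S₂) (hM : ∀ (a : S₁) (c : F), φ.symm (ψ a) = c • a → a = 0)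
    {g g' : V ≃ₗ[F] V}
    (hg : S₁.map (g : V →ₗ[F] V) = S₁ ∧ S₂.map (g : V →ₗ[F] V) = S₂ ∧
      (graphOf (φ : S₁ →ₗ[F] S₂)).map (g : V →ₗ[F] V) = graphOf (φ : S₁ →ₗ[F] S₂) ∧
      (graphOf ψ).map (g : V →ₗ[F] V) = graphOf ψ)
    (hg' : S₁.map (g' : V →ₗ[F] V) = S₁ ∧ S₂.map (g' : V →ₗ[F] V) = S₂ ∧
      (graphOf (φ : S₁ →ₗ[F] S₂)).map (g' : V →ₗ[F] V) = graphOf (φ : S₁ →ₗ[F] S₂) ∧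
      (graphOf ψ).map (g' : V →ₗ[F] V) = graphOf ψ)
    {x : S₁} (hx : x ≠ 0) (hgx : g.symm (g' x) ∈ span F {(x : V)}) :
    ∃ c : Fˣ, ∀ v, g' v = (c : F) • g v := by
  obtain ⟨c, hc⟩ := exists_eq_smul_of_mapsTo h12 hS₁ φ ψ hM (k := g.symm.toLinearMap ∘ₗ g')
    (fun _ => symm_apply_apply_mem_of_map_eq hg.1 hg'.1)
    (fun _ => symm_apply_apply_mem_of_map_eq hg.2.1 hg'.2.1)
    (fun _ => symm_apply_apply_mem_of_map_eq hg.2.2.1 hg'.2.2.1)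
    (fun _ => symm_apply_apply_mem_of_map_eq hg.2.2.2 hg'.2.2.2) hx hgx
  have hc0 : c ≠ 0 := by
    rintro rfl
    simpa [hx] using hc x
  exact ⟨Units.mk0 c hc0, fun v => by simpa using congrArg g (hc v)⟩

end Stabilizer

theorem exists_eq_sup_span_singleton [FiniteDimensional F V] {S T H : Submodule F V}
    (hST : IsCompl S T) (hTH : T ≤ H) (hH : finrank F H = finrank F T + 1) :
    ∃ x ∈ S, x ≠ 0 ∧ H ⊓ S = span F {x} ∧ H = T ⊔ span F {x} := by
  have hmod : T ⊔ H ⊓ S = H := by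
    rw [inf_comm, ← sup_inf_assoc_of_le S hTH, sup_comm, hST.sup_eq_top, top_inf_eq]
  have hdim : finrank F ↥(H ⊓ S) = 1 := by
    have := finrank_sup_add_finrank_inf_eq T (H ⊓ S)
    rw [hmod, (hST.disjoint.symm.mono_right inf_le_right).eq_bot, finrank_bot] at this
    omega
  obtain ⟨x, hx, hx0⟩ := exists_mem_ne_zero_of_finrank_eq_one hdim
  have hspan : H ⊓ S = span F {x} :=
    (eq_of_le_of_finrank_eq ((span_singleton_le_iff_mem _ _).2 hx)
      (by rw [hdim, finrank_span_singleton hx0])).symm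
  exact ⟨x, hx.2, hx0, hspan, by rw [← hspan, hmod]⟩

end Submodule

theorem stmt18_general (F : Type*) [Field F]
    (S₁ S₂ S₃ S₄ : Submodule F (Fin 4 → F))
    (h₁ : finrank F S₁ = 2) (h₂ : finrank F S₂ = 2) (h₃ : finrank F S₃ = 2)
    (h₄ : finrank F S₄ = 2)
    (h12 : S₁ ⊓ S₂ = ⊥) (h13 : S₁ ⊓ S₃ = ⊥) (h14 : S₁ ⊓ S₄ = ⊥)
    (h23 : S₂ ⊓ S₃ = ⊥) (h24 : S₂ ⊓ S₄ = ⊥)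
    (havoid : ∀ T : Submodule F (Fin 4 → F), InRegulus S₁ S₂ S₃ T → S₄ ⊓ T = ⊥) :
    ∀ H H' : Submodule F (Fin 4 → F),
      finrank F H = 3 → finrank F H' = 3 → S₄ ≤ H → S₄ ≤ H' →
      (∃ g : (Fin 4 → F) ≃ₗ[F] (Fin 4 → F),
        (S₁.map (g : (Fin 4 → F) →ₗ[F] (Fin 4 → F)) = S₁ ∧
         S₂.map (g : (Fin 4 → F) →ₗ[F] (Fin 4 → F)) = S₂ ∧
         S₃.map (g : (Fin 4 → F) →ₗ[F] (Fin 4 → F)) = S₃ ∧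
         S₄.map (g : (Fin 4 → F) →ₗ[F] (Fin 4 → F)) = S₄) ∧
        H.map (g : (Fin 4 → F) →ₗ[F] (Fin 4 → F)) = H') ∧
      (∀ g g' : (Fin 4 → F) ≃ₗ[F] (Fin 4 → F),
        (S₁.map (g : (Fin 4 → F) →ₗ[F] (Fin 4 → F)) = S₁ ∧
         S₂.map (g : (Fin 4 → F) →ₗ[F] (Fin 4 → F)) = S₂ ∧
         S₃.map (g : (Fin 4 → F) →ₗ[F] (Fin 4 → F)) = S₃ ∧
         S₄.map (g : (Fin 4 → F) →ₗ[F] (Fin 4 → F)) = S₄) →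
        H.map (g : (Fin 4 → F) →ₗ[F] (Fin 4 → F)) = H' →
        (S₁.map (g' : (Fin 4 → F) →ₗ[F] (Fin 4 → F)) = S₁ ∧
         S₂.map (g' : (Fin 4 → F) →ₗ[F] (Fin 4 → F)) = S₂ ∧
         S₃.map (g' : (Fin 4 → F) →ₗ[F] (Fin 4 → F)) = S₃ ∧
         S₄.map (g' : (Fin 4 → F) →ₗ[F] (Fin 4 → F)) = S₄) →
        H.map (g' : (Fin 4 → F) →ₗ[F] (Fin 4 → F)) = H' →
        ∃ c : Fˣ, ∀ v, g' v = (c : F) • g v) := by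
  intro H H' hH hH' hS₄H hS₄H'
  have hcompl {S T : Submodule F (Fin 4 → F)} (hS : finrank F S = 2) (hT : finrank F T = 2)
      (h : S ⊓ T = ⊥) : IsCompl S T :=
    (isCompl_iff_disjoint _ _ (by simp [hS, hT])).2 (disjoint_iff.2 h)
  have h12' := hcompl h₁ h₂ h12
  obtain ⟨φ, rfl⟩ := exists_linearEquiv_graphOf_eq h12' (hcompl h₂ h₃ h23).symm
    (hcompl h₁ h₃ h13).symm
  obtain ⟨ψ, rfl⟩ := exists_linearEquiv_graphOf_eq h12' (hcompl h₂ h₄ h24).symm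
    (hcompl h₁ h₄ h14).symm
  have hM := eq_zero_of_symm_apply_eq_smul h12'.disjoint h₁ φ ψ havoid
  obtain ⟨x, hxS, hx0, hHx, rfl⟩ :=
    exists_eq_sup_span_singleton (hcompl h₁ h₄ h14) hS₄H (by omega)
  obtain ⟨x', hx'S, hx'0, -, rfl⟩ :=
    exists_eq_sup_span_singleton (hcompl h₁ h₄ h14) hS₄H' (by omega)
  refine ⟨?_, fun g g' hg hgH hg' hg'H => ?_⟩
  · obtain ⟨g, hg₁, hg₂, hg₃, hg₄, hgx⟩ := exists_linearEquiv_map_eq_and_apply_eq h12' h₁ φ ψ hM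
      (x := ⟨x, hxS⟩) (y := ⟨x', hx'S⟩) (by simpa) (by simpa)
    refine ⟨g, ⟨hg₁, hg₂, hg₃, hg₄⟩, ?_⟩
    have hgx' : g x = x' := hgx
    rw [Submodule.map_sup, hg₄, map_span, Set.image_singleton, LinearEquiv.coe_coe, hgx']
  · refine exists_units_smul_of_map_eq h12' h₁ φ ψ hM hg hg' (x := ⟨x, hxS⟩) (by simpa) ?_
    rw [← hHx]
    exact ⟨symm_apply_apply_mem_of_map_eq hgH hg'H (mem_sup_right (mem_span_singleton_self x)),
      symm_apply_apply_mem_of_map_eq hg.1 hg'.1 hxS⟩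

/-- Let `S₁, S₂, S₃, S₄` be pairwise disjoint 2-spaces of `F_q^4` such that `S₄` is
disjoint from the point set of the regulus `R(S₁,S₂,S₃)` (i.e. meets every member of the
regulus trivially). Then the joint stabilizer `U = Stab({S₁,S₂,S₃,S₄})` in `PGL(4,q)`
acts regularly on the `q+1` three-dimensional subspaces containing `S₄`: for any two
3-spaces `H, H'` through `S₄` there is an invertible linear map in the joint stabilizer
sending `H` to `H'`, unique as an element of `PGL(4,q)` (i.e. up to a scalar). -/
theorem stmt18 (F : Type*) [Field F] [Fintype F]
    (S₁ S₂ S₃ S₄ : Submodule F (Fin 4 → F))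
    (h₁ : finrank F S₁ = 2) (h₂ : finrank F S₂ = 2) (h₃ : finrank F S₃ = 2)
    (h₄ : finrank F S₄ = 2)
    (h12 : S₁ ⊓ S₂ = ⊥) (h13 : S₁ ⊓ S₃ = ⊥) (h14 : S₁ ⊓ S₄ = ⊥)
    (h23 : S₂ ⊓ S₃ = ⊥) (h24 : S₂ ⊓ S₄ = ⊥) (h34 : S₃ ⊓ S₄ = ⊥)
    (havoid : ∀ T : Submodule F (Fin 4 → F), InRegulus S₁ S₂ S₃ T → S₄ ⊓ T = ⊥) :
    ∀ H H' : Submodule F (Fin 4 → F),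
      finrank F H = 3 → finrank F H' = 3 → S₄ ≤ H → S₄ ≤ H' →
      (∃ g : (Fin 4 → F) ≃ₗ[F] (Fin 4 → F),
        (S₁.map (g : (Fin 4 → F) →ₗ[F] (Fin 4 → F)) = S₁ ∧
         S₂.map (g : (Fin 4 → F) →ₗ[F] (Fin 4 → F)) = S₂ ∧
         S₃.map (g : (Fin 4 → F) →ₗ[F] (Fin 4 → F)) = S₃ ∧
         S₄.map (g : (Fin 4 → F) →ₗ[F] (Fin 4 → F)) = S₄) ∧
        H.map (g : (Fin 4 → F) →ₗ[F] (Fin 4 → F)) = H') ∧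
      (∀ g g' : (Fin 4 → F) ≃ₗ[F] (Fin 4 → F),
        (S₁.map (g : (Fin 4 → F) →ₗ[F] (Fin 4 → F)) = S₁ ∧
         S₂.map (g : (Fin 4 → F) →ₗ[F] (Fin 4 → F)) = S₂ ∧
         S₃.map (g : (Fin 4 → F) →ₗ[F] (Fin 4 → F)) = S₃ ∧
         S₄.map (g : (Fin 4 → F) →ₗ[F] (Fin 4 → F)) = S₄) →
        H.map (g : (Fin 4 → F) →ₗ[F] (Fin 4 → F)) = H' →
        (S₁.map (g' : (Fin 4 → F) →ₗ[F] (Fin 4 → F)) = S₁ ∧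
         S₂.map (g' : (Fin 4 → F) →ₗ[F] (Fin 4 → F)) = S₂ ∧
         S₃.map (g' : (Fin 4 → F) →ₗ[F] (Fin 4 → F)) = S₃ ∧
         S₄.map (g' : (Fin 4 → F) →ₗ[F] (Fin 4 → F)) = S₄) →
        H.map (g' : (Fin 4 → F) →ₗ[F] (Fin 4 → F)) = H' →
        ∃ c : Fˣ, ∀ v, g' v = (c : F) • g v) :=
  stmt18_general F S₁ S₂ S₃ S₄ h₁ h₂ h₃ h₄ h12 h13 h14 h23 h24 havoid
end
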